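/- For f₁(t),…,f_k(t) ∈ Z[t^{±1}], the Alexander quandle Z[t^{±1}]/(f₁,…,f_k) is connected if and only if gcd(f₁(1),…,f_k(1)) = 1. -/

import Mathlib

open LaurentPolynomial

/-- Evaluation of a Laurent polynomial at `t = 1`, as a ring homomorphism. -/
noncomputable def evalOne : LaurentPolynomial ℤ →+* ℤ :=
  ((AddMonoidAlgebra.lift ℤ ℤ ℤ) 1).toRingHom

/-- The Alexander quandle operation `[α]*[β] = [tα + (1-t)β]` on `ℤ[t,t⁻¹]⧸J`. -/
noncomputable def qOp (J : Ideal (LaurentPolynomial ℤ)) (x y : LaurentPolynomial ℤ ⧸ J) :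
    LaurentPolynomial ℤ ⧸ J :=
  Ideal.Quotient.mk J (T 1) * x + (1 - Ideal.Quotient.mk J (T 1)) * y

/-- The orbit relation of the inner automorphism group. -/
def qRel (J : Ideal (LaurentPolynomial ℤ)) :
    (LaurentPolynomial ℤ ⧸ J) → (LaurentPolynomial ℤ ⧸ J) → Prop :=
  Relation.EqvGen fun x y => ∃ c, qOp J x c = y

lemma evalOne_T (n : ℤ) : evalOne (T n) = 1 := by
  show ((AddMonoidAlgebra.lift ℤ ℤ ℤ) 1) (AddMonoidAlgebra.single n (1:ℤ)) = 1
  rw [AddMonoidAlgebra.lift_single]; simp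

lemma evalOne_C (a : ℤ) : evalOne (C a) = a := by
  show ((AddMonoidAlgebra.lift ℤ ℤ ℤ) 1) (AddMonoidAlgebra.single (0:ℤ) a) = a
  rw [AddMonoidAlgebra.lift_single]; simp

lemma evalOne_toLaurent (p : Polynomial ℤ) : evalOne (Polynomial.toLaurent p) = p.eval 1 := by
  have h : evalOne.comp (Polynomial.toLaurent (R := ℤ)) = Polynomial.evalRingHom 1 := by
    apply Polynomial.ringHom_ext
    · intro a; simp [Polynomial.toLaurent_C, evalOne_C]
    · simp [Polynomial.toLaurent_X, evalOne_T]
  simpa using RingHom.congr_fun h p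

lemma mem_span_of_evalOne (p : LaurentPolynomial ℤ) (h : evalOne p = 0) :
    p ∈ Ideal.span {(1 : LaurentPolynomial ℤ) - T 1} := by
  obtain ⟨n, q, hq⟩ := p.exists_T_pow
  have hp : p = Polynomial.toLaurent q * T (-(n : ℤ)) := by
    have : p * T n * T (-(n : ℤ)) = p := by
      rw [mul_assoc, ← T_add]; simp
    rw [← this, ← hq]
  have hq1 : q.eval 1 = 0 := by
    have := evalOne_toLaurent q
    rw [hq, map_mul, h, evalOne_T] at this
    simpa using this.symm
  have hdvd : (Polynomial.X - Polynomial.C (1:ℤ)) ∣ q :=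
    (Polynomial.dvd_iff_isRoot).mpr hq1
  obtain ⟨r, hr⟩ := hdvd
  rw [Ideal.mem_span_singleton']
  refine ⟨-(Polynomial.toLaurent r * T (-(n:ℤ))), ?_⟩
  rw [hp, hr]
  push_cast [map_mul, map_sub, Polynomial.toLaurent_X, Polynomial.toLaurent_C]
  have : (C (1:ℤ)) = 1 := map_one _
  rw [this]; ring

lemma gcd_mem_span {ι : Type*} [DecidableEq ι] (s : Finset ι) (g : ι → ℤ) :
    s.gcd g ∈ Ideal.span (g '' s) := by
  induction s using Finset.induction with
  | empty => simp
  | insert a s h ih =>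
    rw [Finset.gcd_insert]
    have h1 : GCDMonoid.gcd (g a) (s.gcd g) ∈ Ideal.span {g a, s.gcd g} := by
      rw [← span_gcd]
      exact Ideal.subset_span rfl
    refine Ideal.span_le.mpr ?_ h1
    intro x hx
    rcases hx with rfl | hx
    · exact Ideal.subset_span ⟨a, Finset.mem_insert_self a s, rfl⟩
    · rcases hx with rfl
      exact Ideal.span_mono (Set.image_mono (by simp)) ih

/-- The Alexander quandle `ℤ[t,t⁻¹]/(f₁,…,f_k)` is connected (its inner
automorphism group acts transitively) iff `gcd(f₁(1),…,f_k(1)) = 1`. -/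
theorem stmt_9 {k : ℕ} (f : Fin k → LaurentPolynomial ℤ) :
    (∀ x y : LaurentPolynomial ℤ ⧸ Ideal.span (Set.range f),
        qRel (Ideal.span (Set.range f)) x y) ↔
      (Finset.univ.gcd fun i => evalOne (f i)) = 1 := by
  classical
  set J : Ideal (LaurentPolynomial ℤ) := Ideal.span (Set.range f) with hJ
  set u : LaurentPolynomial ℤ ⧸ J := Ideal.Quotient.mk J (T 1) with hu
  set K : Ideal (LaurentPolynomial ℤ) := Ideal.span {(1 : LaurentPolynomial ℤ) - T 1} with hK
  set g : Fin k → ℤ := fun i => evalOne (f i) with hg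
  -- one-step relation
  have step : ∀ x y : LaurentPolynomial ℤ ⧸ J,
      (∃ c, qOp J x c = y) ↔ y - x ∈ Ideal.span {1 - u} := by
    intro x y
    rw [Ideal.mem_span_singleton']
    constructor
    · rintro ⟨c, hc⟩
      exact ⟨c - x, by rw [← hc]; show (c - x) * (1 - u) = u * x + (1 - u) * c - x; ring⟩
    · rintro ⟨a, ha⟩
      refine ⟨a + x, ?_⟩
      show u * x + (1 - u) * (a + x) = y
      have : a * (1 - u) + x = y := by rw [ha]; ring
      rw [← this]; ring
  have hrel : ∀ x y : LaurentPolynomial ℤ ⧸ J,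
      qRel J x y ↔ y - x ∈ Ideal.span {1 - u} := by
    intro x y
    constructor
    · intro h
      induction h with
      | rel a b hab => exact (step a b).mp hab
      | refl a => simp
      | symm a b _ ih => simpa using (Ideal.span {1 - u}).neg_mem ih
      | trans a b c _ _ ih1 ih2 => simpa using add_mem ih2 ih1
    · intro h
      exact Relation.EqvGen.rel _ _ ((step x y).mpr h)
  have key : (∀ x y : LaurentPolynomial ℤ ⧸ J, qRel J x y) ↔
      Ideal.span {1 - u} = ⊤ := by
    constructor
    · intro h
      rw [Ideal.eq_top_iff_one]
      simpa using (hrel 0 1).mp (h 0 1)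
    · intro h x y
      exact (hrel x y).mpr (by rw [h]; trivial)
  -- translate span {1-u} to map of K
  have hmapK : Ideal.map (Ideal.Quotient.mk J) K = Ideal.span {1 - u} := by
    rw [hK, Ideal.map_span, Set.image_singleton, map_sub, map_one]
  have key2 : Ideal.span {1 - u} = ⊤ ↔ K ⊔ J = ⊤ := by
    rw [← hmapK]
    constructor
    · intro h
      have := congrArg (Ideal.comap (Ideal.Quotient.mk J)) h
      rw [Ideal.comap_map_of_surjective _ Ideal.Quotient.mk_surjective, Ideal.comap_top] at this
      rw [← this]
      congr 1
      exact (Ideal.mk_ker (I := J)).symm.trans rfl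
    · intro h
      have : Ideal.map (Ideal.Quotient.mk J) (K ⊔ J) = ⊤ := by
        rw [h, Ideal.eq_top_iff_one]
        exact Ideal.mem_map_of_mem _ trivial
      rwa [Ideal.map_sup, Ideal.map_quotient_self, sup_bot_eq] at this
  -- final equivalence with gcd
  rw [key, key2]
  constructor
  · intro h
    have h1 : (1 : LaurentPolynomial ℤ) ∈ K ⊔ J := by rw [h]; trivial
    rw [Submodule.mem_sup] at h1
    obtain ⟨a, haK, b, hbJ, hab⟩ := h1
    have ha0 : evalOne a = 0 := by
      rw [Ideal.mem_span_singleton'] at haK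
      obtain ⟨c, rfl⟩ := haK
      rw [map_mul, map_sub, map_one, evalOne_T]
      ring
    have hb1 : evalOne b = 1 := by
      have := congrArg evalOne hab
      rw [map_add, ha0, map_one, zero_add] at this
      exact this
    have hbmem : (1 : ℤ) ∈ Ideal.span (Set.range g) := by
      rw [← hb1]
      have : evalOne b ∈ Ideal.map evalOne J := Ideal.mem_map_of_mem _ hbJ
      rwa [hJ, Ideal.map_span, ← Set.range_comp] at this
    rw [Ideal.mem_span_range_iff_exists_fun] at hbmem
    obtain ⟨c, hc⟩ := hbmem
    have hdvd : Finset.univ.gcd g ∣ 1 := by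
      rw [← hc]
      exact Finset.dvd_sum fun i _ => Dvd.dvd.mul_left (Finset.gcd_dvd (Finset.mem_univ i)) _
    have hn : normalize (Finset.univ.gcd g) = 1 :=
      normalize_eq_one.mpr (isUnit_of_dvd_one hdvd)
    rwa [Finset.normalize_gcd] at hn
  · intro h
    have hmem : (1 : ℤ) ∈ Ideal.span (Set.range g) := by
      have := gcd_mem_span Finset.univ g
      rwa [h, Finset.coe_univ, Set.image_univ] at this
    rw [Ideal.mem_span_range_iff_exists_fun] at hmem
    obtain ⟨c, hc⟩ := hmem
    set p : LaurentPolynomial ℤ := ∑ i, C (c i) * f i with hp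
    have hpJ : p ∈ J := by
      refine Ideal.sum_mem _ fun i _ => Ideal.mul_mem_left _ _ ?_
      exact Ideal.subset_span ⟨i, rfl⟩
    have hpe : evalOne p = 1 := by
      rw [hp, map_sum]
      rw [← hc]
      exact Finset.sum_congr rfl fun i _ => by rw [map_mul, evalOne_C]
    have h1p : (1 : LaurentPolynomial ℤ) - p ∈ K :=
      mem_span_of_evalOne _ (by rw [map_sub, map_one, hpe]; ring)
    rw [Ideal.eq_top_iff_one]
    have : (1 : LaurentPolynomial ℤ) = (1 - p) + p := by ring
    rw [this]
    exact add_mem (Ideal.mem_sup_left h1p) (Ideal.mem_sup_right hpJ)
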